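/- For every k ≥ 1, consider the pair of genomes forming a single cycle with k adjacencies in each genome: on extremities x_1, …, x_{2k}, take Π1 = {{x_{2i-1}, x_{2i}} : 1 ≤ i ≤ k} and Π2 = {{x_{2i}, x_{2i+1}} : 1 ≤ i ≤ k}, indices taken modulo 2k (so the last pair is {x_{2k}, x_1}). Then the number of most parsimonious SCJ scenarios from G1 to G2 equals k · A_{2k-1}, where A_{2k-1} is the number of alternating permutations of size 2k-1. -/

import Mathlib

/-- A genome on an extremity type `V`: a finite set of adjacencies (unordered pairs of
distinct extremities) that are pairwise disjoint (a partial matching). -/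
structure Genome (V : Type*) where
  adj : Finset (Sym2 V)
  not_isDiag : ∀ p ∈ adj, ¬ p.IsDiag
  disj : ∀ p ∈ adj, ∀ q ∈ adj, p ≠ q → ∀ x, x ∈ p → x ∉ q

instance {V : Type*} : Inhabited (Genome V) :=
  ⟨⟨∅, by simp, by simp⟩⟩

variable {V : Type*} [DecidableEq V]

/-- The step from `G` to `G'` is a cut removing the adjacency `p`. -/
def CutsAdj (G G' : Genome V) (p : Sym2 V) : Prop :=
  p ∈ G.adj ∧ G'.adj = G.adj.erase p

/-- The step from `G` to `G'` is a join adding the adjacency `p`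
(validity of `G'` forces `p` to be a pair of distinct, currently unmatched extremities). -/
def JoinsAdj (G G' : Genome V) (p : Sym2 V) : Prop :=
  p ∉ G.adj ∧ G'.adj = insert p G.adj

/-- A single SCJ operation. -/
def SCJStep (G G' : Genome V) : Prop :=
  ∃ p, CutsAdj G G' p ∨ JoinsAdj G G' p

/-- An SCJ scenario from `G1` to `G2`: a finite sequence of genomes starting at `G1`,
ending at `G2`, consecutive ones differing by a single SCJ operation.  A scenario
represented by a list `L` has `L.length - 1` operations. -/
def IsScenario (G1 G2 : Genome V) (L : List (Genome V)) : Prop :=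
  L.head? = some G1 ∧ L.getLast? = some G2 ∧ L.Chain' SCJStep

/-- The SCJ distance: the minimum number of operations in a scenario from `G1` to `G2`. -/
noncomputable def dSCJ (G1 G2 : Genome V) : ℕ :=
  sInf {n | ∃ L, IsScenario G1 G2 L ∧ L.length = n + 1}

/-- A most parsimonious SCJ scenario. -/
def IsMPS (G1 G2 : Genome V) (L : List (Genome V)) : Prop :=
  IsScenario G1 G2 L ∧ L.length = dSCJ G1 G2 + 1

/-- The number of most parsimonious SCJ scenarios from `G1` to `G2`. -/
noncomputable def NumMPS (G1 G2 : Genome V) : ℕ :=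
  {L | IsMPS G1 G2 L}.ncard

/-- The `i`-th step of the scenario `L` (steps indexed from `0`) cuts adjacency `p`. -/
def StepCut (L : List (Genome V)) (i : ℕ) (p : Sym2 V) : Prop :=
  i + 1 < L.length ∧ CutsAdj (L.getD i default) (L.getD (i + 1) default) p

/-- The `i`-th step of the scenario `L` (steps indexed from `0`) joins adjacency `p`. -/
def StepJoin (L : List (Genome V)) (i : ℕ) (p : Sym2 V) : Prop :=
  i + 1 < L.length ∧ JoinsAdj (L.getD i default) (L.getD (i + 1) default) p

/-- `c` is an alternating (up-down) permutation:
`c 0 < c 1 > c 2 < c 3 > …` (i.e. in 1-based notation `c₁ < c₂ > c₃ < …`). -/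
def IsAltPerm {n : ℕ} (c : Equiv.Perm (Fin n)) : Prop :=
  ∀ i : ℕ, ∀ h : i + 1 < n,
    if i % 2 = 0 then c ⟨i, by omega⟩ < c ⟨i + 1, h⟩
    else c ⟨i + 1, h⟩ < c ⟨i, by omega⟩

/-- `A n`, the number of alternating permutations of size `n` (with `A 0 = 1`). -/
noncomputable def altPermCount (n : ℕ) : ℕ :=
  Nat.card {c : Equiv.Perm (Fin n) // IsAltPerm c}

/-!
Label the `2k` adjacencies of `Π1 ∆ Π2` around the cycle by `e ∈ ℤ/2k`, adjacency `e` being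
`{x_{e+1}, x_{e+2}}`: even labels are the cuts (`Π1`), odd labels the joins (`Π2`). An SCJ step
toggles one adjacency, so `d_SCJ = |Π1 ∆ Π2| = 2k` and a most parsimonious scenario toggles each
adjacency of `Π1 ∆ Π2` exactly once. It is thus determined by the permutation `π` giving the time of
each operation, subject to every intermediate adjacency set being a matching. On the cycle this
says that every join comes after the two cuts next to it: `π` is cyclically alternating, with peaks
at the odd labels. The first operation is a cut; rotating by an even amount moves it to label `0`
(`k` choices), and the times of the remaining `2k - 1` labels, read along the path `1, …, 2k - 1`
and reversed, form an alternating permutation.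
-/

open Finset
open scoped symmDiff

theorem Finset.symmDiff_singleton_of_mem {α : Type*} [DecidableEq α] {s : Finset α} {a : α}
    (h : a ∈ s) : s ∆ {a} = s.erase a := by
  ext x; by_cases hx : x = a <;> simp [mem_symmDiff, hx, h]

theorem Finset.symmDiff_singleton_of_notMem {α : Type*} [DecidableEq α] {s : Finset α} {a : α}
    (h : a ∉ s) : s ∆ {a} = insert a s := by
  ext x; by_cases hx : x = a <;> simp [mem_symmDiff, hx, h]

theorem Finset.card_le_card_add_of_symmDiff_singleton {α : Type*} [DecidableEq α]
    {A : ℕ → Finset α} {i j : ℕ} (hij : i ≤ j)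
    (hA : ∀ l, i ≤ l → l < j → ∃ p, A (l + 1) = A l ∆ {p}) : #(A j) ≤ #(A i) + (j - i) := by
  induction j, hij using Nat.le_induction with
  | base => simp
  | succ j hij ih =>
    obtain ⟨p, hp⟩ := hA j hij (by omega)
    have := ih fun l hl hlj => hA l hl (by omega)
    calc #(A (j + 1)) ≤ #(A j ∪ {p}) := by rw [hp]; exact card_le_card symmDiff_subset_union
      _ ≤ #(A j) + 1 := by simpa using card_union_le (A j) {p}
      _ ≤ #(A i) + (j + 1 - i) := by omega

theorem Finset.exists_notMem_insert_of_symmDiff_singleton {α : Type*} [DecidableEq α]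
    {A : ℕ → Finset α} {n : ℕ} (h0 : A 0 = ∅) (hA : ∀ l < n, ∃ p, A (l + 1) = A l ∆ {p})
    (hn : n ≤ #(A n)) {l : ℕ} (hl : l < n) : ∃ p ∉ A l, A (l + 1) = insert p (A l) := by
  have hle := card_le_card_add_of_symmDiff_singleton (Nat.zero_le l)
    fun m _ hm => hA m (by omega)
  have hge := card_le_card_add_of_symmDiff_singleton (show l + 1 ≤ n by omega)
    fun m _ hm => hA m hm
  rw [h0, card_empty] at hle
  obtain ⟨p, hp⟩ := hA l hl
  by_cases hpl : p ∈ A l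
  · rw [hp, symmDiff_singleton_of_mem hpl] at hge
    have := card_erase_le (s := A l) (a := p)
    have := card_erase_lt_of_mem hpl
    omega
  · exact ⟨p, hpl, by rw [hp, symmDiff_singleton_of_notMem hpl]⟩

theorem Finset.map_symmDiff {α β : Type*} [DecidableEq α] [DecidableEq β] (f : α ↪ β)
    (s t : Finset α) : (s ∆ t).map f = s.map f ∆ t.map f := by
  simp only [map_eq_image, image_symmDiff _ _ f.injective]

theorem Genome.ext_adj {V : Type*} {G G' : Genome V} (h : G.adj = G'.adj) : G = G' := by
  cases G; cases G'; congr

theorem Genome.exists_adj_eq_of_subset {V : Type*} (G : Genome V) {s : Finset (Sym2 V)}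
    (hs : s ⊆ G.adj) : ∃ G' : Genome V, G'.adj = s :=
  ⟨⟨s, fun p hp => G.not_isDiag p (hs hp), fun p hp q hq => G.disj p (hs hp) q (hs hq)⟩, rfl⟩

open Classical in
/-- The genome with adjacency set `s`, or `default` if `s` is not a partial matching. -/
noncomputable def Genome.ofAdj {V : Type*} (s : Finset (Sym2 V)) : Genome V :=
  if h : ∃ G : Genome V, G.adj = s then h.choose else default

theorem Genome.ofAdj_eq {V : Type*} {G : Genome V} {s : Finset (Sym2 V)} (h : G.adj = s) :
    Genome.ofAdj s = G := by
  have hs : ∃ G : Genome V, G.adj = s := ⟨G, h⟩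
  rw [Genome.ofAdj, dif_pos hs]
  exact Genome.ext_adj (hs.choose_spec.trans h.symm)

theorem Genome.ofAdj_adj {V : Type*} {s : Finset (Sym2 V)} (h : ∃ G : Genome V, G.adj = s) :
    (Genome.ofAdj s).adj = s := by
  obtain ⟨G, hG⟩ := h
  rw [Genome.ofAdj_eq hG, hG]

theorem scjStep_iff {G G' : Genome V} : SCJStep G G' ↔ ∃ p, G'.adj = G.adj ∆ {p} := by
  constructor
  · rintro ⟨p, ⟨hp, h⟩ | ⟨hp, h⟩⟩
    · exact ⟨p, by rw [h, symmDiff_singleton_of_mem hp]⟩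
    · exact ⟨p, by rw [h, symmDiff_singleton_of_notMem hp]⟩
  · rintro ⟨p, h⟩
    by_cases hp : p ∈ G.adj
    · exact ⟨p, Or.inl ⟨hp, by rw [h, symmDiff_singleton_of_mem hp]⟩⟩
    · exact ⟨p, Or.inr ⟨hp, by rw [h, symmDiff_singleton_of_notMem hp]⟩⟩

theorem IsScenario.getD_zero {G1 G2 : Genome V} {L : List (Genome V)} (hL : IsScenario G1 G2 L) :
    L.getD 0 default = G1 := by
  obtain ⟨h, -, -⟩ := hL
  cases L <;> simp_all

theorem IsScenario.getD_length_sub_one {G1 G2 : Genome V} {L : List (Genome V)}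
    (hL : IsScenario G1 G2 L) : L.getD (L.length - 1) default = G2 := by
  obtain ⟨-, h, -⟩ := hL
  rw [List.getLast?_eq_getElem?] at h
  rw [List.getD_eq_getElem?_getD, h, Option.getD_some]

theorem IsScenario.exists_symmDiff_singleton {G1 G2 : Genome V} {L : List (Genome V)}
    (hL : IsScenario G1 G2 L) {i : ℕ} (hi : i + 1 < L.length) :
    ∃ p, (L.getD (i + 1) default).adj = (L.getD i default).adj ∆ {p} := by
  rw [← scjStep_iff, List.getD_eq_getElem _ _ hi, List.getD_eq_getElem _ _ (by omega)]
  exact List.isChain_iff_getElem.mp hL.2.2 i hi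

theorem IsScenario.card_symmDiff_lt_length {G1 G2 : Genome V} {L : List (Genome V)}
    (hL : IsScenario G1 G2 L) : #(G1.adj ∆ G2.adj) < L.length := by
  have hpos : 0 < L.length := List.length_pos_iff.mpr (by rintro rfl; simp [IsScenario] at hL)
  have key := card_le_card_add_of_symmDiff_singleton (A := fun i => G1.adj ∆ (L.getD i default).adj)
    (Nat.zero_le (L.length - 1)) fun l _ hl => by
      obtain ⟨p, hp⟩ := hL.exists_symmDiff_singleton (i := l) (by omega)
      exact ⟨p, by simp only [hp, symmDiff_assoc]⟩
  simp only [hL.getD_zero, hL.getD_length_sub_one, symmDiff_self, bot_eq_empty, card_empty] at key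
  omega

/-- The adjacencies toggled before time `i`, when each adjacency `ev e` is toggled at time `π e`. -/
def toggled {V : Type*} {n : ℕ} (ev : Fin n ↪ Sym2 V) (π : Equiv.Perm (Fin n)) (i : ℕ) :
    Finset (Sym2 V) :=
  (univ.filter fun e => (π e : ℕ) < i).map ev

theorem mem_toggled {V : Type*} {n : ℕ} {ev : Fin n ↪ Sym2 V} {π : Equiv.Perm (Fin n)}
    {e : Fin n} {i : ℕ} : ev e ∈ toggled ev π i ↔ (π e : ℕ) < i := by
  simp [toggled]

theorem toggled_zero {V : Type*} {n : ℕ} (ev : Fin n ↪ Sym2 V) (π : Equiv.Perm (Fin n)) :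
    toggled ev π 0 = ∅ := by
  simp [toggled]

theorem toggled_self {V : Type*} {n : ℕ} (ev : Fin n ↪ Sym2 V) (π : Equiv.Perm (Fin n)) :
    toggled ev π n = univ.map ev := by
  simp [toggled]

section ValidOrder

variable {n : ℕ} (ev : Fin n ↪ Sym2 V)

def IsValidOrder (G1 : Genome V) (π : Equiv.Perm (Fin n)) : Prop :=
  ∀ i ≤ n, ∃ G : Genome V, G.adj = G1.adj ∆ toggled ev π i

noncomputable def scenarioOf (G1 : Genome V) (π : Equiv.Perm (Fin n)) : List (Genome V) :=
  (List.range (n + 1)).map fun i => Genome.ofAdj (G1.adj ∆ toggled ev π i)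

variable {ev}

theorem toggled_succ (π : Equiv.Perm (Fin n)) {i : ℕ} (hi : i < n) :
    toggled ev π (i + 1) = toggled ev π i ∆ {ev (π.symm ⟨i, hi⟩)} := by
  ext x
  by_cases hx : ∃ e, ev e = x
  · obtain ⟨e, rfl⟩ := hx
    have : e = π.symm ⟨i, hi⟩ ↔ (π e : ℕ) = i := by rw [Equiv.eq_symm_apply, Fin.ext_iff]
    simp only [mem_symmDiff, mem_toggled, mem_singleton, ev.apply_eq_iff_eq, this]
    omega
  · push Not at hx
    simp [toggled, mem_symmDiff, hx, (hx _).symm]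

variable {G1 G2 : Genome V}

theorem length_scenarioOf (π : Equiv.Perm (Fin n)) : (scenarioOf ev G1 π).length = n + 1 := by
  simp [scenarioOf]

theorem getD_scenarioOf (π : Equiv.Perm (Fin n)) {i : ℕ} (hi : i ≤ n) :
    (scenarioOf ev G1 π).getD i default = Genome.ofAdj (G1.adj ∆ toggled ev π i) := by
  simp [scenarioOf, List.getD_eq_getElem?_getD, List.getElem?_range (show i < n + 1 by omega)]

theorem IsValidOrder.isScenario {π : Equiv.Perm (Fin n)} (hπ : IsValidOrder ev G1 π)
    (hev : univ.map ev = G1.adj ∆ G2.adj) : IsScenario G1 G2 (scenarioOf ev G1 π) := by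
  refine ⟨?_, ?_, ?_⟩
  · simp [scenarioOf, List.head?_range, toggled_zero, ← bot_eq_empty, Genome.ofAdj_eq (G := G1) rfl]
  · simp [scenarioOf, List.getLast?_range, toggled_self, hev, Genome.ofAdj_eq (G := G2) rfl]
  · rw [scenarioOf, List.Chain', List.isChain_map, List.isChain_range_succ]
    intro i hi
    rw [scjStep_iff, Genome.ofAdj_adj (hπ _ hi), Genome.ofAdj_adj (hπ _ hi.le),
      toggled_succ π hi, ← symmDiff_assoc]
    exact ⟨_, rfl⟩

theorem exists_isValidOrder (hev : univ.map ev = G1.adj ∆ G2.adj) :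
    ∃ π, IsValidOrder ev G1 π := by
  -- sort the operations so that all cuts come first
  let f : Fin n → ℕ := fun e => if ev e ∈ G1.adj then 0 else 1
  have hmono := Tuple.monotone_sort f
  refine ⟨(Tuple.sort f).symm, fun i _ => ?_⟩
  by_cases hcut : ∀ e, ((Tuple.sort f).symm e : ℕ) < i → ev e ∈ G1.adj
  · refine G1.exists_adj_eq_of_subset fun x hx => ?_
    rcases mem_symmDiff.mp hx with ⟨hx, -⟩ | ⟨hx, hx'⟩
    · exact hx
    · obtain ⟨e, he, rfl⟩ := mem_map.mp hx
      exact absurd (hcut e (by simpa using he)) hx'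
  · push Not at hcut
    obtain ⟨e₀, he₀, hj⟩ := hcut
    refine G2.exists_adj_eq_of_subset fun x hx => ?_
    rcases mem_symmDiff.mp hx with ⟨hx1, hxT⟩ | ⟨hxT, hx1⟩
    · by_contra hx2
      obtain ⟨e, -, rfl⟩ := mem_map.mp (hev ▸ mem_symmDiff.mpr (Or.inl ⟨hx1, hx2⟩))
      rw [mem_toggled, not_lt] at hxT
      have := hmono (show (Tuple.sort f).symm e₀ ≤ (Tuple.sort f).symm e by
        rw [Fin.le_def]; omega)
      simp [f, hx1, hj] at this
    · obtain ⟨e, -, rfl⟩ := mem_map.mp hxT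
      have : ev e ∈ G1.adj ∆ G2.adj := hev ▸ mem_map_of_mem ev (mem_univ e)
      rcases mem_symmDiff.mp this with h | h
      · exact absurd h.1 hx1
      · exact h.1

theorem dSCJ_eq (hev : univ.map ev = G1.adj ∆ G2.adj) : dSCJ G1 G2 = n := by
  obtain ⟨π, hπ⟩ := exists_isValidOrder hev
  have hmem : n ∈ {m | ∃ L, IsScenario G1 G2 L ∧ L.length = m + 1} :=
    ⟨_, hπ.isScenario hev, length_scenarioOf π⟩
  refine le_antisymm (Nat.sInf_le hmem) (le_csInf ⟨n, hmem⟩ ?_)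
  rintro m ⟨L, hL, hlen⟩
  have := hL.card_symmDiff_lt_length
  rw [← hev, card_map, card_univ, Fintype.card_fin] at this
  omega

theorem IsValidOrder.eq_of_scenarioOf_eq {π π' : Equiv.Perm (Fin n)} (hπ : IsValidOrder ev G1 π)
    (hπ' : IsValidOrder ev G1 π') (h : scenarioOf ev G1 π = scenarioOf ev G1 π') : π = π' := by
  have htog : ∀ i ≤ n, toggled ev π i = toggled ev π' i := fun i hi => by
    have := congrArg (fun L => (L.getD i default).adj) h
    simpa only [getD_scenarioOf _ hi, Genome.ofAdj_adj (hπ i hi), Genome.ofAdj_adj (hπ' i hi),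
      symmDiff_right_inj] using this
  have key : ∀ e, ∀ i ≤ n, (π e : ℕ) < i ↔ (π' e : ℕ) < i := fun e i hi => by
    rw [← mem_toggled, ← mem_toggled, htog i hi]
  refine Equiv.ext fun e => Fin.ext ?_
  have := key e (π e + 1) (π e).isLt
  have := key e (π' e + 1) (π' e).isLt
  omega

theorem exists_perm_toggled_eq {A : ℕ → Finset (Sym2 V)} (h0 : A 0 = ∅)
    (hn : A n = univ.map ev) (hA : ∀ l < n, ∃ p ∉ A l, A (l + 1) = insert p (A l)) :
    ∃ π : Equiv.Perm (Fin n), ∀ i ≤ n, toggled ev π i = A i := by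
  classical
  have hmono : ∀ i j, i ≤ j → j ≤ n → A i ⊆ A j := by
    intro i j hij hj
    induction j, hij using Nat.le_induction with
    | base => exact subset_refl _
    | succ j _ ih =>
      obtain ⟨p, -, hp⟩ := hA j (by omega)
      exact (ih (by omega)).trans (hp ▸ subset_insert p (A j))
  have hex : ∀ e : Fin n, ∃ i, ev e ∈ A (i + 1) := fun e =>
    ⟨n - 1, by rw [Nat.sub_add_cancel (Fin.pos e), hn]; exact mem_map_of_mem ev (mem_univ e)⟩
  -- `ev e` enters the chain at step `time e + 1`
  let time e := Nat.find (hex e)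
  have hmem : ∀ e, ∀ i ≤ n, ev e ∈ A i ↔ time e < i := by
    intro e i hi
    constructor
    · intro h
      cases i with
      | zero => simp [h0] at h
      | succ i => exact Nat.lt_succ_of_le (Nat.find_min' _ h)
    · exact fun h => hmono _ _ h hi (Nat.find_spec (hex e))
  have htime : ∀ e, time e < n := fun e =>
    (hmem e n le_rfl).mp (hn ▸ mem_map_of_mem ev (mem_univ e))
  have hinj : Function.Injective fun e => (⟨time e, htime e⟩ : Fin n) := by
    intro e e' h
    obtain ⟨p, -, hAp⟩ := hA (time e) (htime e)
    have hp_eq : ∀ e'', time e'' = time e → ev e'' = p := by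
      intro e'' he''
      have h1 := (hmem e'' (time e + 1) (htime e)).mpr (by omega)
      have h2 := (hmem e'' (time e) (htime e).le).not.mpr (by omega)
      rw [hAp, mem_insert] at h1
      tauto
    exact ev.injective ((hp_eq e rfl).trans (hp_eq e' (congrArg Fin.val h).symm).symm)
  refine ⟨Equiv.ofBijective _ (Finite.injective_iff_bijective.mp hinj), fun i hi => ?_⟩
  ext x
  constructor
  · intro hx
    obtain ⟨e, he, rfl⟩ := mem_map.mp hx
    exact (hmem e i hi).mpr (by simpa using he)
  · intro hx
    obtain ⟨e, -, rfl⟩ := mem_map.mp (hn ▸ hmono i n hi le_rfl hx)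
    exact mem_toggled.mpr ((hmem e i hi).mp hx)

theorem IsScenario.exists_eq_scenarioOf (hev : univ.map ev = G1.adj ∆ G2.adj)
    {L : List (Genome V)} (hL : IsScenario G1 G2 L) (hlen : L.length = n + 1) :
    ∃ π, IsValidOrder ev G1 π ∧ scenarioOf ev G1 π = L := by
  let A i := G1.adj ∆ (L.getD i default).adj
  have h0 : A 0 = ∅ := by simp only [A, hL.getD_zero, symmDiff_self, bot_eq_empty]
  have hn : A n = univ.map ev := by
    simp only [A, hev, symmDiff_right_inj]
    rw [← hL.getD_length_sub_one, hlen, Nat.add_sub_cancel]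
  have hstep : ∀ l < n, ∃ p, A (l + 1) = A l ∆ {p} := fun l hl => by
    obtain ⟨p, hp⟩ := hL.exists_symmDiff_singleton (i := l) (by omega)
    exact ⟨p, by simp only [A, hp, symmDiff_assoc]⟩
  obtain ⟨π, hπ⟩ := exists_perm_toggled_eq h0 hn fun l hl =>
    exists_notMem_insert_of_symmDiff_singleton h0 hstep
      (by rw [hn, card_map, card_univ, Fintype.card_fin]) hl
  have hgenome : ∀ i ≤ n, (L.getD i default).adj = G1.adj ∆ toggled ev π i := fun i hi => by
    rw [hπ i hi, symmDiff_symmDiff_cancel_left]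
  refine ⟨π, fun i hi => ⟨_, hgenome i hi⟩, List.ext_getElem (by rw [length_scenarioOf, hlen]) ?_⟩
  intro i h1 h2
  rw [← List.getD_eq_getElem _ default, ← List.getD_eq_getElem _ default,
    getD_scenarioOf π (by rw [length_scenarioOf] at h1; omega),
    Genome.ofAdj_eq (hgenome i (by omega))]

theorem numMPS_eq_card_isValidOrder (hev : univ.map ev = G1.adj ∆ G2.adj) :
    NumMPS G1 G2 = Nat.card {π // IsValidOrder ev G1 π} := by
  have hMPS : ∀ L, IsMPS G1 G2 L ↔ IsScenario G1 G2 L ∧ L.length = n + 1 := by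
    simp [IsMPS, dSCJ_eq hev]
  let f : {π // IsValidOrder ev G1 π} → {L | IsMPS G1 G2 L} := fun π =>
    ⟨scenarioOf ev G1 π, (hMPS _).mpr ⟨π.2.isScenario hev, length_scenarioOf _⟩⟩
  have hf : Function.Bijective f := by
    refine ⟨fun π π' h => Subtype.ext (π.2.eq_of_scenarioOf_eq π'.2 (congrArg Subtype.val h)), ?_⟩
    rintro ⟨L, hL⟩
    obtain ⟨π, hπ, rfl⟩ := ((hMPS L).mp hL).1.exists_eq_scenarioOf hev ((hMPS L).mp hL).2
    exact ⟨⟨π, hπ⟩, rfl⟩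
  rw [NumMPS, ← Nat.card_coe_set_eq]
  exact (Nat.card_eq_of_bijective f hf).symm

end ValidOrder

theorem numMPS_self (G : Genome V) : NumMPS G G = 1 := by
  rw [numMPS_eq_card_isValidOrder (ev := (Function.Embedding.ofIsEmpty : Fin 0 ↪ Sym2 V))
    (by simp), Nat.card_eq_one_iff_unique]
  refine ⟨inferInstance, ⟨⟨1, fun i hi => ⟨G, ?_⟩⟩⟩⟩
  rw [Nat.le_zero.mp hi, toggled_zero, ← bot_eq_empty, symmDiff_bot]

section CyclicAltPerm

variable {n : ℕ}

open Equiv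

def IsCyclicAltPerm (π : Perm (Fin (n + 1))) : Prop :=
  ∀ e : Fin (n + 1), if (e : ℕ) % 2 = 0 then π e < π (e + 1) else π (e + 1) < π e

theorem Fin.val_add_mod_two_of_odd (hn : Odd n) (a b : Fin (n + 1)) :
    ((a + b : Fin (n + 1)) : ℕ) % 2 = ((a : ℕ) + b) % 2 := by
  obtain ⟨k, rfl⟩ := hn
  rw [Fin.val_add, Nat.mod_mod_of_dvd _ ⟨k + 1, by ring⟩]

theorem Fin.val_neg_mod_two_of_odd (hn : Odd n) {a : Fin (n + 1)} (ha : (a : ℕ) % 2 = 0) :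
    ((-a : Fin (n + 1)) : ℕ) % 2 = 0 := by
  have := Fin.val_add_mod_two_of_odd hn (-a) a
  rw [neg_add_cancel, Fin.val_zero] at this
  omega

theorem isCyclicAltPerm_mul_addRight (hn : Odd n) {π : Perm (Fin (n + 1))} {a : Fin (n + 1)}
    (ha : (a : ℕ) % 2 = 0) : IsCyclicAltPerm (π * Equiv.addRight a) ↔ IsCyclicAltPerm π := by
  have hpar : ∀ e : Fin (n + 1), ((e + a : Fin (n + 1)) : ℕ) % 2 = (e : ℕ) % 2 := fun e => by
    rw [Fin.val_add_mod_two_of_odd hn]; omega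
  constructor
  · intro h e
    have he := hpar (e - a)
    rw [sub_add_cancel] at he
    have := h (e - a)
    simp only [Perm.mul_apply, coe_addRight, sub_add_cancel, add_right_comm _ (1 : Fin (n + 1)),
      ← he] at this
    exact this
  · intro h e
    have := h (e + a)
    simp only [Perm.mul_apply, coe_addRight, add_right_comm _ (1 : Fin (n + 1)), hpar] at this ⊢
    exact this

theorem IsCyclicAltPerm.symm_zero_mod_two {π : Perm (Fin (n + 1))} (hπ : IsCyclicAltPerm π) :
    (π.symm 0 : ℕ) % 2 = 0 := by
  by_contra h
  have := hπ (π.symm 0)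
  rw [if_neg h, Equiv.apply_symm_apply] at this
  exact Fin.not_lt_zero _ this

def rotateMinToZero (hn : Odd n) :
    {π : Perm (Fin (n + 1)) // IsCyclicAltPerm π} ≃
      {a : Fin (n + 1) // (a : ℕ) % 2 = 0} ×
        {ρ : Perm (Fin (n + 1)) // IsCyclicAltPerm ρ ∧ ρ 0 = 0} where
  toFun π := (⟨π.1.symm 0, π.2.symm_zero_mod_two⟩,
    ⟨π.1 * Equiv.addRight (π.1.symm 0),
      (isCyclicAltPerm_mul_addRight hn π.2.symm_zero_mod_two).2 π.2, by simp⟩)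
  invFun x := ⟨x.2.1 * Equiv.addRight (-x.1.1),
    (isCyclicAltPerm_mul_addRight hn (Fin.val_neg_mod_two_of_odd hn x.1.2)).2 x.2.2.1⟩
  left_inv π := Subtype.ext (Equiv.ext fun e => by simp)
  right_inv := by
    rintro ⟨⟨a, ha⟩, ⟨ρ, hρ, h0⟩⟩
    have hsymm : (ρ * Equiv.addRight (-a)).symm 0 = a := by
      rw [Equiv.symm_apply_eq]; simp [h0]
    ext1
    · exact Subtype.ext hsymm
    · exact Subtype.ext (Equiv.ext fun e => by simp [hsymm])

theorem card_even_fin (hn : Odd n) :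
    Nat.card {a : Fin (n + 1) // (a : ℕ) % 2 = 0} = (n + 1) / 2 := by
  obtain ⟨k, rfl⟩ := hn
  rw [show (2 * k + 1 + 1) / 2 = k + 1 by omega, ← Nat.card_fin (k + 1)]
  exact Nat.card_congr
    { toFun a := ⟨a.1 / 2, by omega⟩
      invFun t := ⟨⟨2 * t, by omega⟩, by simp⟩
      left_inv a := Subtype.ext (Fin.ext (by simp; omega))
      right_inv t := Fin.ext (by simp) }

theorem Equiv.Perm.decomposeFin_symm_zero_apply_succ (σ : Perm (Fin n)) (j : Fin n) :
    decomposeFin.symm (0, σ) j.succ = (σ j).succ := by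
  rw [decomposeFin_symm_apply_succ, swap_self, refl_apply]

theorem Equiv.Perm.decomposeFin_symm_zero_snd {ρ : Perm (Fin (n + 1))} (h : ρ 0 = 0) :
    decomposeFin.symm (0, (decomposeFin ρ).2) = ρ := by
  have hfst : (decomposeFin ρ).1 = 0 := by
    rw [← h, ← decomposeFin_symm_apply_zero (decomposeFin ρ).1 (decomposeFin ρ).2,
      Prod.mk.eta, Equiv.symm_apply_apply]
  conv_rhs => rw [← decomposeFin.symm_apply_apply ρ, ← Prod.mk.eta (p := decomposeFin ρ), hfst]

theorem Fin.succ_add_one {j : Fin n} (hj : (j : ℕ) + 1 < n) :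
    j.succ + 1 = (⟨j + 1, hj⟩ : Fin n).succ := by
  ext
  rw [Fin.val_add_one, if_neg (by rw [Fin.ext_iff]; simp; omega)]
  simp

/-- `decomposeFin.symm (0, σ)` fixes `0` and acts as `σ` on `1, …, n`. As `0` is then the minimum,
the conditions at positions `0` and `n` hold automatically, and the others are those of
`IsAltPerm` for the reversed values. -/
theorem isCyclicAltPerm_decomposeFin_symm_iff (hn : Odd n) (σ : Perm (Fin n)) :
    IsCyclicAltPerm (Perm.decomposeFin.symm (0, σ)) ↔ IsAltPerm (Fin.revPerm * σ) := by
  set ρ := Perm.decomposeFin.symm (0, σ)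
  have hρ0 : ρ 0 = 0 := Perm.decomposeFin_symm_apply_zero 0 σ
  have hpos : ∀ e, e ≠ 0 → ρ 0 < ρ e := fun e he => by
    rw [hρ0, Fin.pos_iff_ne_zero, ← hρ0]; exact ρ.injective.ne he
  constructor
  · intro h i hi
    have := h (⟨i, by omega⟩ : Fin n).succ
    simp only [Fin.succ_add_one (j := ⟨i, by omega⟩) hi, ρ, Perm.decomposeFin_symm_zero_apply_succ,
      Fin.succ_lt_succ_iff, Fin.val_succ] at this
    simp only [Perm.mul_apply, Fin.revPerm_apply, Fin.rev_lt_rev]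
    split_ifs at this ⊢ <;> first | exact this | omega
  · intro h e
    induction e using Fin.cases with
    | zero =>
      obtain ⟨k, rfl⟩ := hn
      simpa using hpos 1 (by simp)
    | succ j =>
      by_cases hj : (j : ℕ) + 1 < n
      · have := h j hj
        simp only [Perm.mul_apply, Fin.revPerm_apply, Fin.rev_lt_rev] at this
        simp only [Fin.succ_add_one hj, ρ, Perm.decomposeFin_symm_zero_apply_succ,
          Fin.succ_lt_succ_iff, Fin.val_succ]
        split_ifs at this ⊢ <;> first | exact this | omega
      · have hlast : j.succ + 1 = 0 := by
          ext
          rw [Fin.val_add_one, if_pos (by ext; simp; omega), Fin.val_zero]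
        rw [hlast, if_neg (by obtain ⟨k, rfl⟩ := hn; simp; omega)]
        exact hpos _ (Fin.succ_ne_zero j)

theorem Fin.revPerm_mul_revPerm : (Fin.revPerm : Perm (Fin n)) * Fin.revPerm = 1 := by
  ext; simp

def cutAtZeroEquiv (hn : Odd n) :
    {ρ : Perm (Fin (n + 1)) // IsCyclicAltPerm ρ ∧ ρ 0 = 0} ≃
      {c : Perm (Fin n) // IsAltPerm c} where
  toFun ρ := ⟨Fin.revPerm * (Perm.decomposeFin ρ.1).2,
    (isCyclicAltPerm_decomposeFin_symm_iff hn _).1 <| by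
      rw [Perm.decomposeFin_symm_zero_snd ρ.2.2]; exact ρ.2.1⟩
  invFun c := ⟨Perm.decomposeFin.symm (0, Fin.revPerm * c.1),
    (isCyclicAltPerm_decomposeFin_symm_iff hn _).2 <| by
      rw [← mul_assoc, Fin.revPerm_mul_revPerm, one_mul]; exact c.2,
    Perm.decomposeFin_symm_apply_zero _ _⟩
  left_inv ρ := Subtype.ext <| by
    simp only [← mul_assoc, Fin.revPerm_mul_revPerm, one_mul,
      Perm.decomposeFin_symm_zero_snd ρ.2.2]
  right_inv c := Subtype.ext <| by
    simp only [Equiv.apply_symm_apply, ← mul_assoc, Fin.revPerm_mul_revPerm, one_mul]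

theorem card_isCyclicAltPerm (hn : Odd n) :
    Nat.card {π : Perm (Fin (n + 1)) // IsCyclicAltPerm π} = (n + 1) / 2 * altPermCount n := by
  rw [Nat.card_congr (rotateMinToZero hn), Nat.card_prod, card_even_fin hn,
    Nat.card_congr (cutAtZeroEquiv hn), altPermCount]

end CyclicAltPerm

section Cycle

variable {n : ℕ}

open Equiv

theorem Fin.ne_add_one (hn : 1 ≤ n) (e : Fin (n + 1)) : e ≠ e + 1 := by
  intro h
  have := congrArg Fin.val h
  rw [Fin.val_add_one] at this
  split_ifs at this with he
  · rw [he, Fin.val_last] at this; omega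
  · omega

/-- The adjacency `{x_{e+1}, x_{e+2}}` of the cycle on the extremities `x_i = i`, `1 ≤ i ≤ n + 1`,
indices taken modulo `n + 1`. -/
def cycleAdj (e : Fin (n + 1)) : Sym2 ℕ := s((e : ℕ) + 1, ((e + 1 : Fin (n + 1)) : ℕ) + 1)

theorem cycleAdj_eq (e : Fin (n + 1)) :
    cycleAdj e = s((e : ℕ) + 1, ((e : ℕ) + 1) % (n + 1) + 1) := by
  simp [cycleAdj, Fin.val_add]

theorem cycleAdj_injective (hn : 2 ≤ n) : Function.Injective (cycleAdj (n := n)) := by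
  intro e e' h
  rcases Sym2.eq_iff.mp h with ⟨h1, -⟩ | ⟨h1, h2⟩
  · exact Fin.ext (by omega)
  · have h3 := Fin.val_add_one e
    have h4 := Fin.val_add_one e'
    simp only [Fin.ext_iff, Fin.val_last] at h3 h4
    split_ifs at h3 h4 <;> omega

theorem cycleAdj_not_isDiag (hn : 1 ≤ n) (e : Fin (n + 1)) : ¬ (cycleAdj e).IsDiag := by
  rw [cycleAdj, Sym2.mk_isDiag_iff]
  intro h
  exact Fin.ne_add_one hn e (Fin.ext (by omega))

theorem eq_or_adjacent_of_mem_cycleAdj {e e' : Fin (n + 1)} {x : ℕ} (h : x ∈ cycleAdj e)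
    (h' : x ∈ cycleAdj e') : e = e' ∨ e' = e + 1 ∨ e = e' + 1 := by
  simp only [cycleAdj, Sym2.mem_iff] at h h'
  rcases h with rfl | rfl <;> rcases h' with h' | h'
  · exact Or.inl (Fin.ext (by omega))
  · exact Or.inr (Or.inr (Fin.ext (by omega)))
  · exact Or.inr (Or.inl (Fin.ext (by omega)))
  · exact Or.inl (add_right_cancel (b := (1 : Fin (n + 1))) (Fin.ext (by omega)))

def cycleAdjEmb (hn : 2 ≤ n) : Fin (n + 1) ↪ Sym2 ℕ := ⟨cycleAdj, cycleAdj_injective hn⟩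

theorem exists_genome_map_cycleAdjEmb_iff (hn : 2 ≤ n) (s : Finset (Fin (n + 1))) :
    (∃ G : Genome ℕ, G.adj = s.map (cycleAdjEmb hn)) ↔ ∀ e ∈ s, e + 1 ∉ s := by
  constructor
  · rintro ⟨G, hG⟩ e he he1
    refine G.disj _ (hG ▸ mem_map_of_mem _ he) _ (hG ▸ mem_map_of_mem _ he1)
      ((cycleAdjEmb hn).injective.ne (Fin.ne_add_one (by omega) e))
      (((e + 1 : Fin (n + 1)) : ℕ) + 1) ?_ ?_ <;> simp [cycleAdjEmb, cycleAdj]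
  · intro h
    refine ⟨⟨s.map (cycleAdjEmb hn), ?_, ?_⟩, rfl⟩
    · simp only [mem_map]
      rintro _ ⟨e, -, rfl⟩
      exact cycleAdj_not_isDiag (by omega) e
    · simp only [mem_map]
      rintro _ ⟨e, he, rfl⟩ _ ⟨e', he', rfl⟩ hne x hx hx'
      rcases eq_or_adjacent_of_mem_cycleAdj hx hx' with rfl | rfl | rfl
      · exact hne rfl
      · exact h e he he'
      · exact h e' he' he

theorem isValidOrder_cycleAdjEmb_iff (hn : 2 ≤ n) (hodd : Odd n) {G1 : Genome ℕ}
    (hG1 : G1.adj = (univ.filter fun e : Fin (n + 1) => (e : ℕ) % 2 = 0).map (cycleAdjEmb hn))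
    (π : Perm (Fin (n + 1))) : IsValidOrder (cycleAdjEmb hn) G1 π ↔ IsCyclicAltPerm π := by
  have hpar : ∀ e : Fin (n + 1), ((e + 1 : Fin (n + 1)) : ℕ) % 2 = ((e : ℕ) + 1) % 2 := fun e => by
    rw [Fin.val_add_mod_two_of_odd hodd, Fin.val_one', Nat.mod_eq_of_lt (by omega : 1 < n + 1)]
  have hne : ∀ e : Fin (n + 1), (π e : ℕ) ≠ π (e + 1) := fun e =>
    Fin.val_injective.ne (π.injective.ne (Fin.ne_add_one (by omega) e))
  simp only [IsValidOrder, hG1, toggled, ← Finset.map_symmDiff, exists_genome_map_cycleAdjEmb_iff,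
    mem_symmDiff, mem_filter, mem_univ, true_and]
  constructor
  · intro h e
    have := hpar e
    have := hne e
    split_ifs with he
    · have := h (π e) (π e).isLt.le e
      rw [Fin.lt_def]; omega
    · have := h (π e + 1) (π e).isLt e
      rw [Fin.lt_def]; omega
  · intro h i _ e
    have hπe := h e
    have := hpar e
    split_ifs at hπe <;> rw [Fin.lt_def] at hπe <;> omega

theorem map_cycleAdjEmb_univ (hn : 2 ≤ n) :
    univ.map (cycleAdjEmb hn) =
      (univ.filter fun e : Fin (n + 1) => (e : ℕ) % 2 = 0).map (cycleAdjEmb hn) ∆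
        (univ.filter fun e : Fin (n + 1) => (e : ℕ) % 2 = 1).map (cycleAdjEmb hn) := by
  rw [← Finset.map_symmDiff]
  congr 1
  ext e
  simp only [mem_univ, mem_symmDiff, mem_filter, true_and, true_iff]
  omega

theorem image_Icc_eq_map_cycleAdjEmb_even {k : ℕ} (hk : 2 * k = n + 1) (hn : 2 ≤ n) :
    ((Icc 1 k).image fun t => s(2 * t - 1, 2 * t)) =
      (univ.filter fun e : Fin (n + 1) => (e : ℕ) % 2 = 0).map (cycleAdjEmb hn) := by
  ext p
  simp only [mem_image, mem_Icc, mem_map, mem_filter, mem_univ, true_and, cycleAdjEmb,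
    Function.Embedding.coeFn_mk, cycleAdj_eq]
  constructor
  · rintro ⟨t, ht, rfl⟩
    refine ⟨⟨2 * t - 2, by omega⟩, by simp; omega, ?_⟩
    simp only [Nat.mod_eq_of_lt (show 2 * t - 2 + 1 < n + 1 by omega)]
    rw [show 2 * t - 2 + 1 = 2 * t - 1 by omega, show 2 * t - 1 + 1 = 2 * t by omega]
  · rintro ⟨e, he, rfl⟩
    refine ⟨(e : ℕ) / 2 + 1, by omega, ?_⟩
    rw [Nat.mod_eq_of_lt (show (e : ℕ) + 1 < n + 1 by omega),
      show 2 * ((e : ℕ) / 2 + 1) - 1 = e + 1 by omega,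
      show 2 * ((e : ℕ) / 2 + 1) = e + 1 + 1 by omega]

theorem image_Icc_eq_map_cycleAdjEmb_odd {k : ℕ} (hk : 2 * k = n + 1) (hn : 2 ≤ n) :
    ((Icc 1 k).image fun t => s(2 * t, 2 * t % (n + 1) + 1)) =
      (univ.filter fun e : Fin (n + 1) => (e : ℕ) % 2 = 1).map (cycleAdjEmb hn) := by
  ext p
  simp only [mem_image, mem_Icc, mem_map, mem_filter, mem_univ, true_and, cycleAdjEmb,
    Function.Embedding.coeFn_mk, cycleAdj_eq]
  constructor
  · rintro ⟨t, ht, rfl⟩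
    refine ⟨⟨2 * t - 1, by omega⟩, by simp; omega, ?_⟩
    simp only [show 2 * t - 1 + 1 = 2 * t by omega]
  · rintro ⟨e, he, rfl⟩
    refine ⟨((e : ℕ) + 1) / 2, by omega, ?_⟩
    rw [show 2 * (((e : ℕ) + 1) / 2) = e + 1 by omega]

end Cycle

theorem altPermCount_one : altPermCount 1 = 1 := by
  rw [altPermCount, Nat.card_eq_one_iff_unique]
  exact ⟨inferInstance, ⟨⟨1, fun i hi => by omega⟩⟩⟩

/-- For the pair of genomes forming a single cycle with `k ≥ 1`
adjacencies in each genome (extremities `1, …, 2k`, `Π1 = {{2t-1, 2t} : 1 ≤ t ≤ k}`,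
`Π2 = {{2t, 2t+1} : 1 ≤ t ≤ k}` with indices taken modulo `2k`, so the last pair is
`{2k, 1}`), the number of most parsimonious SCJ scenarios from `G1` to `G2` equals
`k · A (2k-1)`. -/
theorem cycle_count (k : ℕ) (hk : 1 ≤ k) (G1 G2 : Genome ℕ)
    (h1 : G1.adj = (Finset.Icc 1 k).image fun t => s(2 * t - 1, 2 * t))
    (h2 : G2.adj = (Finset.Icc 1 k).image fun t => s(2 * t, (2 * t) % (2 * k) + 1)) :
    NumMPS G1 G2 = k * altPermCount (2 * k - 1) := by
  obtain rfl | hk := hk.eq_or_lt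
  · have : G1 = G2 := Genome.ext_adj (by rw [h1, h2]; decide)
    rw [this, numMPS_self, altPermCount_one]
  obtain ⟨n, hkn⟩ : ∃ n, 2 * k = n + 1 := ⟨2 * k - 1, by omega⟩
  have hn : 2 ≤ n := by omega
  have hodd : Odd n := ⟨k - 1, by omega⟩
  rw [image_Icc_eq_map_cycleAdjEmb_even hkn hn] at h1
  rw [hkn, image_Icc_eq_map_cycleAdjEmb_odd hkn hn] at h2
  rw [numMPS_eq_card_isValidOrder (by rw [h1, h2]; exact map_cycleAdjEmb_univ hn),
    Nat.card_congr (Equiv.subtypeEquivRight (isValidOrder_cycleAdjEmb_iff hn hodd h1)),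
    card_isCyclicAltPerm hodd, ← hkn, Nat.mul_div_cancel_left k two_pos,
    show 2 * k - 1 = n by omega]
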